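/- Let P be a convex d-polytope in E^d, and for sufficiently large k let y_{v,k} > 0 (v ∈ vert(P)) be the unique scalars with f_k(w) = 1 for all vertices w, where f_k(x) := Σ_{v ∈ vert(P)} y_{v,k} ((1/deg(v)) Σ_{F facet containing v} (1 − q_F(x))^{2k})^{2k}, and S_k := {x ∈ E^d : f_k(x) ≤ 1}. Then for all sufficiently large k and every vertex v of P, S_k ∩ C_v = {v}. -/

import Mathlib

noncomputable section

open Metric Set Finset Matrix
open scoped RealInnerProductSpace BigOperators Classical

namespace AverkovHenk

abbrev E (d : ℕ) := EuclideanSpace ℝ (Fin d)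

/-- Support function `h(P,u)` of `P` in direction `u`. -/
def supp {d : ℕ} (P : Set (E d)) (u : E d) : ℝ :=
  sSup ((fun x => ⟪u, x⟫) '' P)

/-- The normalized affine function `q_F` of the facet with outward unit normal `u`. -/
def qf {d : ℕ} (P : Set (E d)) (u : E d) (x : E d) : ℝ :=
  (supp P u - ⟪u, x⟫) / Metric.diam P

/-- The exposed face of `P` in direction `u`. -/
def faceOf {d : ℕ} (P : Set (E d)) (u : E d) : Set (E d) :=
  {x ∈ P | ⟪u, x⟫ = supp P u}

/-- `u` is an outward unit normal of a facet (a `(d-1)`-dimensional face) of `P`. -/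
def IsFacetNormal {d : ℕ} (P : Set (E d)) (u : E d) : Prop :=
  ‖u‖ = 1 ∧ Module.finrank ℝ ↥(vectorSpan ℝ (faceOf P u)) = d - 1

/-- The vertices of `P`, i.e. its extreme points. -/
def vertices {d : ℕ} (P : Set (E d)) : Set (E d) := Set.extremePoints ℝ P

/-- The `l`-th elementary symmetric function of `y_1, …, y_m`. -/
def esymm {m : ℕ} (y : Fin m → ℝ) (l : ℕ) : ℝ :=
  ∑ J ∈ Finset.powersetCard l (Finset.univ : Finset (Fin m)), ∏ j ∈ J, y j

/-- A presentation of a convex `d`-polytope `P ⊆ E^d` by the `m` outward unit normals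
`u 0, …, u (m-1)` of its facets, together with the induced representation
`P = {x | q_j(x) ≥ 0 for all j}`. -/
structure FacetRep (d m : ℕ) where
  P : Set (E d)
  u : Fin m → E d
  convex : Convex ℝ P
  compact : IsCompact P
  fulldim : (interior P).Nonempty
  inj : Function.Injective u
  facet : ∀ j, IsFacetNormal P (u j)
  complete : ∀ w : E d, IsFacetNormal P w → ∃ j, w = u j
  rep : P = {x | ∀ j, 0 ≤ qf P (u j) x}

namespace FacetRep

variable {d m : ℕ}

/-- The vector `q(x) = (q_1(x), …, q_m(x))`. -/
def q (R : FacetRep d m) (x : E d) : Fin m → ℝ := fun j => qf R.P (R.u j) x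

/-- The indices of the facets containing the point `v`. -/
def act (R : FacetRep d m) (v : E d) : Finset (Fin m) :=
  Finset.univ.filter fun j => R.q v j = 0

/-- The polytope is simple: each vertex lies on exactly `d` facets. -/
def Simple (R : FacetRep d m) : Prop :=
  ∀ v ∈ vertices R.P, (R.act v).card = d

/-- The enlarged polytope `P_ε`. -/
def Peps (R : FacetRep d m) (ε : ℝ) : Set (E d) := {x | ∀ j, -ε ≤ R.q x j}

/-- The box `Π_{v,ε} = {x : |q_v(x)|_∞ ≤ ε}`. -/
def Piv (R : FacetRep d m) (v : E d) (ε : ℝ) : Set (E d) :=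
  {x | ∀ j ∈ R.act v, |R.q x j| ≤ ε}

/-- The cone `C_v = {x : -σ_1(q_v(x)) ≥ (2/3)|q_v(x)|}` (Euclidean norm). -/
def Cv (R : FacetRep d m) (v : E d) : Set (E d) :=
  {x | (2/3) * Real.sqrt (∑ j ∈ R.act v, (R.q x j)^2) ≤ -(∑ j ∈ R.act v, R.q x j)}

/-- The polytope `P^v_{ε,δ}`. -/
def Pv (R : FacetRep d m) (v : E d) (ε δ : ℝ) : Set (E d) :=
  {x | (∀ j ∈ R.act v, -ε ≤ R.q x j) ∧ ∀ j ∉ R.act v, δ ≤ R.q x j}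

/-- `γ = max{1 - q_F(v) : F a facet, v a vertex not on F}`. -/
def gam (R : FacetRep d m) : ℝ :=
  sSup {c | ∃ v ∈ vertices R.P, ∃ j, R.q v j ≠ 0 ∧ c = 1 - R.q v j}

/-- The polynomial `f_k` built from weights `y_v` over the vertex set `V`. -/
def fk (R : FacetRep d m) (V : Finset (E d)) (y : ↥V → ℝ) (k : ℕ) (x : E d) : ℝ :=
  ∑ v : ↥V, y v * ((∑ j ∈ R.act v.1, (1 - R.q x j)^(2*k)) / (R.act v.1).card)^(2*k)

/-- The matrix `A_k` indexed by the vertex set `V`. -/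
def Ak (R : FacetRep d m) (V : Finset (E d)) (k : ℕ) : Matrix ↥V ↥V ℝ :=
  Matrix.of fun w v : ↥V => ((∑ j ∈ R.act v.1, (1 - R.q w.1 j)^(2*k)) / (R.act v.1).card)^(2*k)

/-- `deg(P)`: the maximal number of facets through a vertex. -/
def degP (R : FacetRep d m) (V : Finset (E d)) : ℕ := V.sup fun v => (R.act v).card

end FacetRep

/-- `|U_s^{-1}|_2` where `U_s` is the matrix with rows `u_j^T`, `j ∈ s`: the supremum of `‖x‖`
over the set where the Euclidean norm of `U_s x` is at most `1`. -/
def invNormU {d m : ℕ} (u : Fin m → E d) (s : Finset (Fin m)) : ℝ :=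
  sSup {c | ∃ x : E d, Real.sqrt (∑ j ∈ s, (⟪u j, x⟫)^2) ≤ 1 ∧ c = ‖x‖}

/-- `α = max_{v ∈ vert(P)} |U_v^{-1}|_2`. -/
def alpha {d m : ℕ} (R : FacetRep d m) (V : Finset (E d)) : ℝ :=
  sSup {a | ∃ v ∈ V, a = invNormU R.u (R.act v)}

/-- The normal cone `N(Q,x) = {u : ⟨x,u⟩ = h(Q,u)}`. -/
def normalCone {d : ℕ} (Q : Set (E d)) (x : E d) : Set (E d) :=
  {u | ⟪u, x⟫ = supp Q u}

/-- `S` is an edge (a 1-dimensional face) of `P`. -/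
def IsEdgeOf {d : ℕ} (P S : Set (E d)) : Prop :=
  IsExposed ℝ P S ∧ Module.finrank ℝ ↥(vectorSpan ℝ S) = 1

/-!
Write `g_{w,k}(x) = meanPow (R.act w) k (R.q x)` for the mean of `(1 - q_F(x))^(2k)` over the
facets `F` through `w`, so that `f_k = ∑_w y_w g_{w,k}^(2k)` and `g_{w,k}(w) = 1`. For vertices
`v ≠ w` some facet through `w` misses `v`, so `g_{w,k}(v) ≤ r < 1` for large `k`; then
`f_k(v) = 1` forces `1/2 ≤ y_v ≤ 1`.

Let `x ∈ C_v`, `x ≠ v`, with `t = |q_v(x)| > 0`. Bernoulli's inequality, applied twice, gives the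
gain `g_{v,k}(x)^(2k) ≥ 1 + (8k²/(3 deg v)) t`, so `f_k(x) ≤ 1` first forces `t = O(1/k²)`. Since
the facet normals at `v` span, `x` is then `O(t)`-close to `v`, and every other term
`y_w g_{w,k}^(2k)` loses at most `O(k² r^(2k-1) t)` between `v` and `x`. For large `k` the total
loss is smaller than the gain, so `f_k(x) > f_k(v) = 1`.
-/

open Filter Topology

theorem one_add_two_mul_le_pow_two_mul (a : ℝ) (k : ℕ) : 1 + 2 * k * a ≤ (1 + a) ^ (2 * k) := by
  rcases le_or_gt (-2) a with ha | ha
  · exact_mod_cast one_add_mul_le_pow ha (2 * k)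
  · have h1 : 1 ≤ (1 + a) ^ 2 := by nlinarith
    calc 1 + 2 * k * a ≤ 1 := by nlinarith [k.cast_nonneg (α := ℝ)]
      _ ≤ ((1 + a) ^ 2) ^ k := one_le_pow₀ h1
      _ = (1 + a) ^ (2 * k) := by rw [← pow_mul]

theorem pow_sub_pow_le_mul_abs_sub {a b r : ℝ} (n : ℕ) (ha : 0 ≤ a) (hb : 0 ≤ b) (har : a ≤ r) :
    a ^ n - b ^ n ≤ n * r ^ (n - 1) * |a - b| := by
  rcases le_total b a with hba | hab
  · calc a ^ n - b ^ n ≤ |a ^ n - b ^ n| := le_abs_self _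
      _ ≤ |a - b| * n * max |a| |b| ^ (n - 1) := abs_pow_sub_pow_le _ _ _
      _ ≤ |a - b| * n * r ^ (n - 1) := by
          rw [abs_of_nonneg ha, abs_of_nonneg hb, max_eq_left hba]
          gcongr
      _ = n * r ^ (n - 1) * |a - b| := by ring
  · have hr : 0 ≤ r := ha.trans har
    have hpow : a ^ n ≤ b ^ n := pow_le_pow_left₀ ha hab n
    have hrhs : 0 ≤ n * r ^ (n - 1) * |a - b| := by positivity
    linarith

theorem one_add_pow_le_three {δ : ℝ} {n : ℕ} (hδ : 0 ≤ δ) (hnδ : n * δ ≤ 1) :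
    (1 + δ) ^ n ≤ 3 :=
  calc (1 + δ) ^ n ≤ Real.exp δ ^ n :=
        pow_le_pow_left₀ (by linarith) (by linarith [Real.add_one_le_exp δ]) n
    _ = Real.exp (n * δ) := (Real.exp_nat_mul δ n).symm
    _ ≤ Real.exp 1 := Real.exp_le_exp.2 hnδ
    _ ≤ 3 := (Real.exp_one_lt_d9.trans (by norm_num)).le

section MeanPow

variable {ι : Type*} (s : Finset ι) (k : ℕ)

def meanPow (a : ι → ℝ) : ℝ := (∑ j ∈ s, (1 - a j) ^ (2 * k)) / s.card

theorem meanPow_nonneg (a : ι → ℝ) : 0 ≤ meanPow s k a :=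
  div_nonneg (sum_nonneg fun _ _ => (even_two_mul k).pow_nonneg _) (Nat.cast_nonneg _)

variable {s}

theorem meanPow_eq_one (hs : s.Nonempty) {a : ι → ℝ} (ha : ∀ j ∈ s, a j = 0) :
    meanPow s k a = 1 := by
  rw [meanPow, sum_congr rfl fun j hj => by rw [ha j hj, sub_zero, one_pow], sum_const,
    nsmul_one]
  exact div_self (by exact_mod_cast hs.card_pos.ne')

theorem meanPow_le_one_sub {a : ι → ℝ} (ha : ∀ j ∈ s, 0 ≤ a j ∧ a j ≤ 1) {i : ι} (hi : i ∈ s)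
    (hai : (1 - a i) ^ (2 * k) ≤ 1 / 2) : meanPow s k a ≤ 1 - 1 / (2 * s.card) := by
  have hn : (0 : ℝ) < s.card := by exact_mod_cast card_pos.2 ⟨i, hi⟩
  have hrest : ∑ j ∈ s.erase i, (1 - a j) ^ (2 * k) ≤ (s.card - 1 : ℝ) := by
    rw [← cast_card_erase_of_mem hi]
    simpa using sum_le_card_nsmul (s.erase i) (fun j => (1 - a j) ^ (2 * k)) 1 fun j hj =>
      pow_le_one₀ (by linarith [(ha j (mem_of_mem_erase hj)).2])
        (by linarith [(ha j (mem_of_mem_erase hj)).1])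
  rw [meanPow, ← add_sum_erase s _ hi, div_le_iff₀ hn]
  field_simp
  linarith

theorem one_add_mul_le_meanPow_pow (hs : s.Nonempty) {a : ι → ℝ} (ha : ∑ j ∈ s, a j ≤ 0) :
    1 + 4 * k ^ 2 / s.card * -(∑ j ∈ s, a j) ≤ meanPow s k a ^ (2 * k) := by
  have hn : (0 : ℝ) < s.card := by exact_mod_cast hs.card_pos
  have hmean : 1 + 2 * k / s.card * -(∑ j ∈ s, a j) ≤ meanPow s k a := by
    rw [meanPow, le_div_iff₀ hn]
    calc (1 + 2 * k / s.card * -(∑ j ∈ s, a j)) * s.card = ∑ j ∈ s, (1 + 2 * k * -a j) := by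
          rw [sum_add_distrib, sum_const, nsmul_one, ← mul_sum, sum_neg_distrib]
          field_simp
      _ ≤ ∑ j ∈ s, (1 - a j) ^ (2 * k) := sum_le_sum fun j _ => by
          simpa [sub_eq_add_neg] using one_add_two_mul_le_pow_two_mul (-a j) k
  have h0 : 0 ≤ 2 * k / s.card * -(∑ j ∈ s, a j) := by
    have := neg_nonneg.2 ha
    positivity
  calc 1 + 4 * k ^ 2 / s.card * -(∑ j ∈ s, a j)
        = 1 + 2 * k * (2 * k / s.card * -(∑ j ∈ s, a j)) := by ring
    _ ≤ (1 + 2 * k / s.card * -(∑ j ∈ s, a j)) ^ (2 * k) := one_add_two_mul_le_pow_two_mul _ k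
    _ ≤ meanPow s k a ^ (2 * k) := pow_le_pow_left₀ (by linarith) hmean _

theorem meanPow_pow_sub_meanPow_pow_le {a b : ι → ℝ} {δ r : ℝ} (hδ : 0 ≤ δ)
    (ha : ∀ j ∈ s, 0 ≤ a j ∧ a j ≤ 1) (hab : ∀ j ∈ s, |a j - b j| ≤ δ) (hkδ : 2 * k * δ ≤ 1)
    (hr : meanPow s k a ≤ r) :
    meanPow s k a ^ (2 * k) - meanPow s k b ^ (2 * k) ≤ 12 * k ^ 2 * r ^ (2 * k - 1) * δ := by
  have hterm : ∀ j ∈ s, |(1 - a j) ^ (2 * k) - (1 - b j) ^ (2 * k)| ≤ 6 * k * δ := by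
    intro j hj
    have hM : max |1 - a j| |1 - b j| ≤ 1 + δ := by
      have := abs_le.1 (hab j hj)
      exact max_le (abs_le.2 ⟨by linarith [(ha j hj).2], by linarith [(ha j hj).1]⟩)
        (abs_le.2 ⟨by linarith [(ha j hj).2], by linarith [(ha j hj).1]⟩)
    have h3 : (1 + δ) ^ (2 * k - 1) ≤ 3 := one_add_pow_le_three hδ <| by
      calc ((2 * k - 1 : ℕ) : ℝ) * δ ≤ ((2 * k : ℕ) : ℝ) * δ := by gcongr; omega
        _ ≤ 1 := by push_cast; exact hkδ
    calc |(1 - a j) ^ (2 * k) - (1 - b j) ^ (2 * k)|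
        ≤ |(1 - a j) - (1 - b j)| * (2 * k : ℕ) * max |1 - a j| |1 - b j| ^ (2 * k - 1) :=
          abs_pow_sub_pow_le _ _ _
      _ ≤ δ * (2 * k : ℕ) * 3 := by
          rw [sub_sub_sub_cancel_left, abs_sub_comm]
          gcongr
          · exact hab j hj
          · exact (pow_le_pow_left₀ (by positivity) hM _).trans h3
      _ = 6 * k * δ := by push_cast; ring
  have hdiff : |meanPow s k a - meanPow s k b| ≤ 6 * k * δ := by
    rw [meanPow, meanPow, div_sub_div_same, ← sum_sub_distrib, abs_div, Nat.abs_cast]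
    refine div_le_of_le_mul₀ (Nat.cast_nonneg _) (by positivity) ?_
    calc |∑ j ∈ s, ((1 - a j) ^ (2 * k) - (1 - b j) ^ (2 * k))|
        ≤ ∑ j ∈ s, |(1 - a j) ^ (2 * k) - (1 - b j) ^ (2 * k)| := abs_sum_le_sum_abs _ _
      _ ≤ s.card • (6 * k * δ) := sum_le_card_nsmul _ _ _ hterm
      _ = 6 * k * δ * s.card := by rw [nsmul_eq_mul, mul_comm]
  have hr0 : 0 ≤ r := (meanPow_nonneg s k a).trans hr
  calc meanPow s k a ^ (2 * k) - meanPow s k b ^ (2 * k)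
      ≤ (2 * k : ℕ) * r ^ (2 * k - 1) * |meanPow s k a - meanPow s k b| :=
        pow_sub_pow_le_mul_abs_sub _ (meanPow_nonneg s k a) (meanPow_nonneg s k b) hr
    _ ≤ (2 * k : ℕ) * r ^ (2 * k - 1) * (6 * k * δ) := by gcongr
    _ = 12 * k ^ 2 * r ^ (2 * k - 1) * δ := by push_cast; ring

end MeanPow

theorem sum_mul_lt_sum_mul_of_gain_loss {ι : Type*} [Fintype ι] [DecidableEq ι]
    {y T T' : ι → ℝ} (i : ι) {g L : ℝ} (hgain : g ≤ y i * (T' i - T i))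
    (hloss : ∀ j ≠ i, y j * (T j - T' j) ≤ L) (hL : 0 ≤ L) (hgL : Fintype.card ι * L < g) :
    ∑ j, y j * T j < ∑ j, y j * T' j := by
  have hrest : ∑ j ∈ univ.erase i, y j * (T j - T' j) ≤ Fintype.card ι * L :=
    calc ∑ j ∈ univ.erase i, y j * (T j - T' j) ≤ ∑ _j ∈ univ.erase i, L :=
          sum_le_sum fun j hj => hloss j (ne_of_mem_erase hj)
      _ ≤ Fintype.card ι * L := by
          rw [sum_const, nsmul_eq_mul]
          gcongr
          exact card_erase_le.trans_eq card_univ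
  rw [← add_sum_erase _ _ (mem_univ i), ← add_sum_erase _ _ (mem_univ i)]
  simp only [mul_sub, sum_sub_distrib] at hrest
  linarith [mul_sub (y i) (T' i) (T i)]

theorem exists_norm_le_mul_sqrt_sum_inner_sq {F ι : Type*} [NormedAddCommGroup F]
    [InnerProductSpace ℝ F] [FiniteDimensional ℝ F] (s : Finset ι) (u : ι → F)
    (hu : ∀ z, (∀ j ∈ s, ⟪u j, z⟫ = 0) → z = 0) :
    ∃ K > 0, ∀ z, ‖z‖ ≤ K * √(∑ j ∈ s, ⟪u j, z⟫ ^ 2) := by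
  let f : F →ₗ[ℝ] EuclideanSpace ℝ s :=
    (WithLp.linearEquiv 2 ℝ (s → ℝ)).symm.toLinearMap ∘ₗ LinearMap.pi fun j => innerₛₗ ℝ (u j)
  have hf : ∀ z, ‖f z‖ = √(∑ j ∈ s, ⟪u j, z⟫ ^ 2) := fun z => by
    simp [f, EuclideanSpace.norm_eq, sum_attach s fun j => ⟪u j, z⟫ ^ 2]
  have hker : LinearMap.ker f = ⊥ := LinearMap.ker_eq_bot'.2 fun z hz =>
    hu z fun j hj => by simpa [f] using congrArg (· ⟨j, hj⟩) hz
  obtain ⟨K, hK, hKf⟩ := f.exists_antilipschitzWith hker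
  exact ⟨K, hK, fun z => (hKf.le_mul_norm (map_zero f) z).trans_eq (by rw [hf])⟩

namespace FacetRep

variable {d m : ℕ} (R : FacetRep d m)

theorem mem_act_iff {v : E d} {j : Fin m} : j ∈ R.act v ↔ R.q v j = 0 := by
  simp [act]

theorem mem_iff_forall_q_nonneg {x : E d} : x ∈ R.P ↔ ∀ j, 0 ≤ R.q x j := by
  rw [R.rep]
  rfl

theorem q_nonneg {x : E d} (hx : x ∈ R.P) (j : Fin m) : 0 ≤ R.q x j :=
  R.mem_iff_forall_q_nonneg.1 hx j

theorem q_le_one {x : E d} (hx : x ∈ R.P) (j : Fin m) : R.q x j ≤ 1 := by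
  obtain ⟨z, hz, hzmax⟩ := R.compact.exists_isMaxOn ⟨x, hx⟩
    (innerSL ℝ (R.u j)).continuous.continuousOn
  have hsupp : supp R.P (R.u j) = ⟪R.u j, z⟫ :=
    IsGreatest.csSup_eq ⟨⟨z, hz, rfl⟩, by rintro _ ⟨y, hy, rfl⟩; exact hzmax hy⟩
  refine div_le_one_of_le₀ ?_ diam_nonneg
  rw [hsupp, ← inner_sub_right]
  calc ⟪R.u j, z - x⟫ ≤ ‖R.u j‖ * ‖z - x‖ := real_inner_le_norm _ _
    _ = dist z x := by rw [(R.facet j).1, one_mul, dist_eq_norm]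
    _ ≤ diam R.P := dist_le_diam_of_mem R.compact.isBounded hz hx

theorem q_sub_q (x y : E d) (j : Fin m) : R.q x j - R.q y j = ⟪R.u j, y - x⟫ / diam R.P := by
  simp only [q, qf, inner_sub_right]
  ring

theorem diam_pos [NeZero d] : 0 < diam R.P := by
  obtain ⟨x, hx⟩ := R.fulldim
  refine Metric.diam_pos ?_ R.compact.isBounded
  rcases eq_singleton_or_nontrivial (interior_subset hx) with h | h
  · rw [h, interior_singleton] at hx
    exact absurd hx (notMem_empty x)
  · exact h

theorem eq_zero_of_forall_inner_eq_zero {v : E d} (hv : v ∈ vertices R.P) {z : E d}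
    (hz : ∀ j ∈ R.act v, ⟪R.u j, z⟫ = 0) : z = 0 := by
  have hq : ∀ (t : ℝ) j, R.q (v + t • z) j = R.q v j - t * ⟪R.u j, z⟫ / diam R.P := by
    intro t j
    have := R.q_sub_q (v + t • z) v j
    rw [sub_add_cancel_left, inner_neg_right, real_inner_smul_right, neg_div] at this
    linarith
  have hnear : ∀ᶠ t in 𝓝 (0 : ℝ), v + t • z ∈ R.P := by
    simp only [R.mem_iff_forall_q_nonneg, hq, eventually_all]
    intro j
    by_cases hj : j ∈ R.act v
    · exact Eventually.of_forall fun t => by simp [hz j hj, R.q_nonneg hv.1 j]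
    · have hpos : 0 < R.q v j := (R.q_nonneg hv.1 j).lt_of_ne' (mt R.mem_act_iff.2 hj)
      have hcont : Continuous fun t : ℝ => R.q v j - t * ⟪R.u j, z⟫ / diam R.P := by fun_prop
      exact ((hcont.tendsto' 0 _ (by simp)).eventually_const_lt hpos).mono fun t ht => ht.le
  obtain ⟨ε, hε, hball⟩ := Metric.eventually_nhds_iff.1 hnear
  have hmem : ∀ t : ℝ, |t| < ε → v + t • z ∈ R.P := fun t ht => hball (by simpa using ht)
  have hseg : v ∈ openSegment ℝ (v + (-(ε / 2)) • z) (v + (ε / 2) • z) :=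
    ⟨1 / 2, 1 / 2, by norm_num, by norm_num, by norm_num, by module⟩
  have hε2 : |ε / 2| < ε := by rw [abs_of_pos (half_pos hε)]; linarith
  have := ((mem_extremePoints.1 hv).2 _ (hmem _ (by rwa [abs_neg])) _ (hmem _ hε2) hseg).1
  rw [add_eq_left, smul_eq_zero] at this
  exact this.resolve_left (by linarith)

theorem mem_Cv_self (v : E d) : v ∈ R.Cv v := by
  have h : ∀ j ∈ R.act v, R.q v j = 0 := fun j hj => R.mem_act_iff.1 hj
  have h2 : ∑ j ∈ R.act v, R.q v j ^ 2 = 0 := sum_eq_zero fun j hj => by rw [h j hj, sq, mul_zero]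
  simp [Cv, sum_eq_zero h, h2]

variable {V : Finset (E d)} {y : V → ℝ} {k : ℕ}

theorem fk_eq (x : E d) :
    R.fk V y k x = ∑ w : V, y w * meanPow (R.act w) k (R.q x) ^ (2 * k) := rfl

theorem weight_mul_le_fk (hy0 : ∀ w, 0 ≤ y w) (w : V) (x : E d) :
    y w * meanPow (R.act w) k (R.q x) ^ (2 * k) ≤ R.fk V y k x :=
  single_le_sum (f := fun w : V => y w * meanPow (R.act w) k (R.q x) ^ (2 * k))
    (fun w _ => mul_nonneg (hy0 w) (pow_nonneg (meanPow_nonneg _ _ _) _)) (mem_univ w)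

variable [NeZero d]

theorem eq_of_forall_q_eq {v x : E d} (hv : v ∈ vertices R.P)
    (h : ∀ j ∈ R.act v, R.q x j = R.q v j) : x = v := by
  refine sub_eq_zero.1 (R.eq_zero_of_forall_inner_eq_zero hv fun j hj => ?_)
  have := R.q_sub_q v x j
  rw [h j hj, sub_self, eq_comm, div_eq_zero_iff] at this
  exact this.resolve_right R.diam_pos.ne'

theorem act_nonempty {v : E d} (hv : v ∈ vertices R.P) : (R.act v).Nonempty := by
  by_contra h
  rw [Finset.not_nonempty_iff_eq_empty] at h
  obtain ⟨z, hz⟩ := exists_ne (0 : E d)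
  exact hz (R.eq_zero_of_forall_inner_eq_zero hv (by simp [h]))

theorem exists_mem_act_q_pos {v w : E d} (hv : v ∈ R.P) (hw : w ∈ vertices R.P) (hvw : v ≠ w) :
    ∃ j ∈ R.act w, 0 < R.q v j := by
  by_contra! h
  refine hvw (R.eq_of_forall_q_eq hw fun j hj => ?_)
  rw [R.mem_act_iff.1 hj]
  exact le_antisymm (h j hj) (R.q_nonneg hv j)

theorem exists_abs_q_sub_le {v : E d} (hv : v ∈ vertices R.P) :
    ∃ β > 0, ∀ x j, |R.q x j - R.q v j| ≤ β * √(∑ i ∈ R.act v, R.q x i ^ 2) := by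
  obtain ⟨K, hK, hKz⟩ := exists_norm_le_mul_sqrt_sum_inner_sq (R.act v) R.u
    fun z => R.eq_zero_of_forall_inner_eq_zero hv
  have hD := R.diam_pos
  have hinner : ∀ x, ∀ i ∈ R.act v, ⟪R.u i, v - x⟫ = diam R.P * R.q x i := fun x i hi => by
    have := R.q_sub_q x v i
    rw [R.mem_act_iff.1 hi, sub_zero, eq_div_iff hD.ne'] at this
    linarith
  refine ⟨K, hK, fun x j => ?_⟩
  rw [R.q_sub_q, abs_div, abs_of_pos hD, div_le_iff₀ hD]
  calc |⟪R.u j, v - x⟫| ≤ ‖v - x‖ :=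
        (abs_real_inner_le_norm _ _).trans_eq (by rw [(R.facet j).1, one_mul])
    _ ≤ K * √(∑ i ∈ R.act v, ⟪R.u i, v - x⟫ ^ 2) := hKz _
    _ = K * √(∑ i ∈ R.act v, R.q x i ^ 2) * diam R.P := by
        rw [sum_congr rfl fun i hi => by rw [hinner x i hi, mul_pow], ← mul_sum,
          Real.sqrt_mul (sq_nonneg _), Real.sqrt_sq hD.le]
        ring

theorem one_add_mul_le_meanPow_pow_of_mem_Cv {v x : E d} (hv : v ∈ vertices R.P)
    (hx : x ∈ R.Cv v) (k : ℕ) :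
    1 + 8 * k ^ 2 / (3 * (R.act v).card) * √(∑ j ∈ R.act v, R.q x j ^ 2)
      ≤ meanPow (R.act v) k (R.q x) ^ (2 * k) := by
  have hx' : 2 / 3 * √(∑ j ∈ R.act v, R.q x j ^ 2) ≤ -∑ j ∈ R.act v, R.q x j := hx
  have hσ : ∑ j ∈ R.act v, R.q x j ≤ 0 := by
    linarith [Real.sqrt_nonneg (∑ j ∈ R.act v, R.q x j ^ 2)]
  refine le_trans ?_ (one_add_mul_le_meanPow_pow k (R.act_nonempty hv) hσ)
  have hcoef : 8 * (k : ℝ) ^ 2 / (3 * (R.act v).card) = 4 * k ^ 2 / (R.act v).card * (2 / 3) := by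
    ring
  rw [hcoef, mul_assoc]
  gcongr

theorem meanPow_act_self {w : E d} (hw : w ∈ vertices R.P) : meanPow (R.act w) k (R.q w) = 1 :=
  meanPow_eq_one k (R.act_nonempty hw) fun _ hj => R.mem_act_iff.1 hj

theorem weight_le_one (hV : ↑V ⊆ vertices R.P) (hy0 : ∀ w, 0 ≤ y w)
    (hy1 : ∀ w : V, R.fk V y k w = 1) (w : V) : y w ≤ 1 := by
  simpa [R.meanPow_act_self (hV w.2), hy1 w] using R.weight_mul_le_fk (k := k) hy0 w w

theorem one_sub_card_mul_pow_le_weight (hV : ↑V ⊆ vertices R.P) (hy0 : ∀ w, 0 ≤ y w)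
    (hy1 : ∀ w : V, R.fk V y k w = 1) {r : ℝ} (v : V)
    (hr : ∀ w : V, w ≠ v → meanPow (R.act w) k (R.q v) ≤ r) :
    1 - V.card * r ^ (2 * k) ≤ y v := by
  have hrest : ∑ w ∈ univ.erase v, y w * meanPow (R.act w) k (R.q v) ^ (2 * k)
      ≤ V.card * r ^ (2 * k) :=
    calc _ ≤ ∑ _w ∈ univ.erase v, r ^ (2 * k) := sum_le_sum fun w hw =>
          (mul_le_of_le_one_left (pow_nonneg (meanPow_nonneg _ _ _) _)
            (R.weight_le_one hV hy0 hy1 w)).trans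
            (pow_le_pow_left₀ (meanPow_nonneg _ _ _) (hr w (ne_of_mem_erase hw)) _)
      _ ≤ V.card * r ^ (2 * k) := by
          rw [sum_const, nsmul_eq_mul]
          gcongr
          · exact (even_two_mul k).pow_nonneg r
          · exact card_erase_le.trans_eq (card_univ.trans (Fintype.card_coe V))
  have h1 := hy1 v
  rw [fk_eq, ← add_sum_erase _ _ (mem_univ v), R.meanPow_act_self (hV v.2), one_pow,
    mul_one] at h1
  linarith

theorem sqrt_sum_q_sq_le_of_fk_le_one (hy0 : ∀ w, 0 ≤ y w) {v : V} (hv : v.1 ∈ vertices R.P)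
    (hyv : 1 / 2 ≤ y v) (hk : 0 < k) {x : E d} (hxC : x ∈ R.Cv v) (hfx : R.fk V y k x ≤ 1) :
    √(∑ j ∈ R.act v, R.q x j ^ 2) ≤ 3 * (R.act v).card / (8 * k ^ 2) := by
  have hn : (0 : ℝ) < (R.act v.1).card := by exact_mod_cast (R.act_nonempty hv).card_pos
  have hgain := R.one_add_mul_le_meanPow_pow_of_mem_Cv hv hxC k
  have hT := (R.weight_mul_le_fk hy0 v x).trans hfx
  have hc : 0 ≤ 8 * (k : ℝ) ^ 2 / (3 * (R.act v.1).card) * √(∑ j ∈ R.act v, R.q x j ^ 2) := by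
    positivity
  have hct : 8 * (k : ℝ) ^ 2 / (3 * (R.act v.1).card) * √(∑ j ∈ R.act v, R.q x j ^ 2) ≤ 1 := by
    nlinarith
  rw [le_div_iff₀ (by positivity)]
  rw [div_mul_eq_mul_div, div_le_one (by positivity)] at hct
  linarith

theorem inter_Cv_eq_singleton (hV : ↑V ⊆ vertices R.P) {r β : ℝ} (hk : 0 < k)
    (hy0 : ∀ w, 0 ≤ y w) (hy1 : ∀ w : V, R.fk V y k w = 1) (v : V) (hr0 : 0 ≤ r)
    (hr : ∀ w : V, w ≠ v → meanPow (R.act w) k (R.q v) ≤ r) (hβ0 : 0 ≤ β)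
    (hβ : ∀ x j, |R.q x j - R.q v j| ≤ β * √(∑ i ∈ R.act v, R.q x i ^ 2))
    (hrN : V.card * r ^ (2 * k) ≤ 1 / 2) (hβk : (R.act v).card * β ≤ k)
    (hrβ : 12 * V.card * β * r ^ (2 * k - 1) < 4 / (3 * (R.act v).card)) :
    {x | R.fk V y k x ≤ 1} ∩ R.Cv v = {v.1} := by
  have hv := hV v.2
  have hn : (0 : ℝ) < (R.act v.1).card := by exact_mod_cast (R.act_nonempty hv).card_pos
  have hk' : (0 : ℝ) < k := by exact_mod_cast hk
  have hyv : 1 / 2 ≤ y v := by linarith [R.one_sub_card_mul_pow_le_weight hV hy0 hy1 v hr]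
  refine subset_antisymm (fun x ⟨hfx, hxC⟩ => ?_)
    (singleton_subset_iff.2 ⟨(hy1 v).le, R.mem_Cv_self v⟩)
  by_contra hxv
  set t := √(∑ j ∈ R.act v, R.q x j ^ 2)
  have ht : 0 < t := by
    refine (Real.sqrt_nonneg _).lt_of_ne' fun h0 => hxv (R.eq_of_forall_q_eq hv fun j hj => ?_)
    rw [Real.sqrt_eq_zero (sum_nonneg fun _ _ => sq_nonneg _),
      sum_eq_zero_iff_of_nonneg fun _ _ => sq_nonneg _] at h0
    rw [pow_eq_zero_iff two_ne_zero |>.1 (h0 j hj), R.mem_act_iff.1 hj]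
  have htk := R.sqrt_sum_q_sq_le_of_fk_le_one hy0 hv hyv hk hxC hfx
  have hkδ : 2 * k * (β * t) ≤ 1 :=
    calc 2 * k * (β * t) ≤ 2 * k * (β * (3 * (R.act v.1).card / (8 * k ^ 2))) := by gcongr
      _ = 3 / 4 * ((R.act v.1).card * β / k) := by field_simp; ring
      _ ≤ 3 / 4 * 1 := by gcongr; rwa [div_le_one hk']
      _ ≤ 1 := by norm_num
  set L := 12 * k ^ 2 * r ^ (2 * k - 1) * (β * t)
  have hL : 0 ≤ L := by positivity
  have hloss : ∀ w ≠ v, y w * (meanPow (R.act w) k (R.q v) ^ (2 * k)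
      - meanPow (R.act w) k (R.q x) ^ (2 * k)) ≤ L := fun w hw => by
    have hdiff := meanPow_pow_sub_meanPow_pow_le k (mul_nonneg hβ0 ht.le)
      (fun j _ => ⟨R.q_nonneg hv.1 j, R.q_le_one hv.1 j⟩)
      (fun j _ => by rw [abs_sub_comm]; exact hβ x j) hkδ (hr w hw)
    nlinarith [R.weight_le_one hV hy0 hy1 w, hy0 w]
  have hgain : 1 + 8 * k ^ 2 / (3 * (R.act v.1).card) * t
      ≤ meanPow (R.act v) k (R.q x) ^ (2 * k) := R.one_add_mul_le_meanPow_pow_of_mem_Cv hv hxC k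
  have hself : meanPow (R.act v) k (R.q v) ^ (2 * k) = 1 := by
    rw [R.meanPow_act_self hv, one_pow]
  have hlt := sum_mul_lt_sum_mul_of_gain_loss v (g := 4 * k ^ 2 / (3 * (R.act v.1).card) * t)
    (by
      rw [hself, show 4 * (k : ℝ) ^ 2 / (3 * (R.act v.1).card) * t
        = 1 / 2 * (8 * k ^ 2 / (3 * (R.act v.1).card) * t) by ring]
      exact mul_le_mul hyv (by linarith) (by positivity) (hy0 v)) hloss hL <| by
      rw [Fintype.card_coe]
      calc V.card * L = 12 * V.card * β * r ^ (2 * k - 1) * (k ^ 2 * t) := by ring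
        _ < 4 / (3 * (R.act v.1).card) * (k ^ 2 * t) := by gcongr
        _ = 4 * k ^ 2 / (3 * (R.act v.1).card) * t := by ring
  change R.fk V y k v < R.fk V y k x at hlt
  linarith [hy1 v, show R.fk V y k x ≤ 1 from hfx]

theorem exists_eventually_meanPow_le (hV : ↑V ⊆ vertices R.P) :
    ∃ r, 0 ≤ r ∧ r < 1 ∧
      ∀ᶠ k in atTop, ∀ v w : V, w ≠ v → meanPow (R.act w) k (R.q v) ≤ r := by
  have hm : 1 / (2 * ((m : ℝ) + 1)) ≤ 1 / 2 := by
    gcongr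
    linarith [m.cast_nonneg (α := ℝ)]
  have hm0 : 0 < 1 / (2 * ((m : ℝ) + 1)) := by positivity
  refine ⟨1 - 1 / (2 * (m + 1)), by linarith, by linarith, ?_⟩
  simp only [eventually_all]
  intro v w hvw
  have hvP := (hV v.2).1
  obtain ⟨j, hj, hpos⟩ :=
    R.exists_mem_act_q_pos hvP (hV w.2) (Subtype.coe_injective.ne (Ne.symm hvw))
  have hlim : Tendsto (fun k : ℕ => (1 - R.q v j) ^ (2 * k)) atTop (𝓝 0) :=
    (tendsto_pow_atTop_nhds_zero_of_lt_one (by linarith [R.q_le_one hvP j]) (by linarith)).comp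
      (tendsto_atTop_atTop.2 fun b => ⟨b, fun k hk => by omega⟩)
  filter_upwards [hlim.eventually (ge_mem_nhds one_half_pos)] with k hk
  have hcard : (0 : ℝ) < (R.act w).card := by exact_mod_cast card_pos.2 ⟨j, hj⟩
  calc meanPow (R.act w) k (R.q v) ≤ 1 - 1 / (2 * (R.act w).card) :=
        meanPow_le_one_sub k (fun i _ => ⟨R.q_nonneg hvP i, R.q_le_one hvP i⟩) hj hk
    _ ≤ 1 - 1 / (2 * (m + 1)) := by
        have : ((R.act w).card : ℝ) ≤ m + 1 := by
          exact_mod_cast (card_le_univ _).trans (by simp)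
        gcongr

theorem eventually_inter_Cv_eq_singleton (hV : ↑V ⊆ vertices R.P) {y : ℕ → V → ℝ}
    (hy : ∀ᶠ k in atTop, (∀ w, 0 ≤ y k w) ∧ ∀ w : V, R.fk V (y k) k w = 1) (v : V) :
    ∀ᶠ k in atTop, {x | R.fk V (y k) k x ≤ 1} ∩ R.Cv v = {v.1} := by
  obtain ⟨r, hr0, hr1, hsep⟩ := R.exists_eventually_meanPow_le hV
  obtain ⟨β, hβ0, hβ⟩ := R.exists_abs_q_sub_le (hV v.2)
  have hpow := tendsto_pow_atTop_nhds_zero_of_lt_one hr0 hr1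
  have h2k : Tendsto (fun k : ℕ => 2 * k) atTop atTop :=
    tendsto_atTop_atTop.2 fun b => ⟨b, fun k hk => by omega⟩
  have h2k1 : Tendsto (fun k : ℕ => 2 * k - 1) atTop atTop :=
    tendsto_atTop_atTop.2 fun b => ⟨b + 1, fun k hk => by omega⟩
  have hN : ∀ᶠ k : ℕ in atTop, (V.card : ℝ) * r ^ (2 * k) ≤ 1 / 2 := by
    have := (hpow.comp h2k).const_mul (V.card : ℝ)
    rw [mul_zero] at this
    exact this.eventually (ge_mem_nhds one_half_pos)
  have hNβ : ∀ᶠ k : ℕ in atTop,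
      12 * V.card * β * r ^ (2 * k - 1) < 4 / (3 * (R.act v).card) := by
    have := (hpow.comp h2k1).const_mul (12 * V.card * β)
    rw [mul_zero] at this
    have hcard : (0 : ℝ) < (R.act v.1).card := by exact_mod_cast (R.act_nonempty (hV v.2)).card_pos
    exact this.eventually (gt_mem_nhds (div_pos four_pos (mul_pos three_pos hcard)))
  filter_upwards [hy, hsep, hN, hNβ, eventually_ge_atTop ⌈(R.act v).card * β⌉₊,
    eventually_gt_atTop 0] with k ⟨hy0, hy1⟩ hr hrN hrβ hβk hk
  exact R.inter_Cv_eq_singleton hV hk hy0 hy1 v hr0 (fun w hw => hr v w hw) hβ0.le hβ hrN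
    (Nat.ceil_le.1 hβk) hrβ

end FacetRep

theorem statement9 (d m : ℕ) (hd : 2 ≤ d) (R : FacetRep d m)
    (V : Finset (E d)) (hV : (↑V : Set (E d)) = vertices R.P)
    (k₀ : ℕ) (y : ℕ → ↥V → ℝ)
    (hy : ∀ k ≥ k₀, (∀ v, 0 < y k v) ∧ ∀ w : ↥V, R.fk V (y k) k w.1 = 1) :
    ∃ k₁ : ℕ, ∀ k ≥ k₁, ∀ v ∈ V,
      {x : E d | R.fk V (y k) k x ≤ 1} ∩ R.Cv v = {v} := by
  have : NeZero d := ⟨by omega⟩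
  have hy' : ∀ᶠ k in atTop, (∀ w, 0 ≤ y k w) ∧ ∀ w : V, R.fk V (y k) k w = 1 :=
    eventually_atTop.2 ⟨k₀, fun k hk => ⟨fun w => ((hy k hk).1 w).le, (hy k hk).2⟩⟩
  exact eventually_atTop.1 <| (eventually_all_finset V).2 fun v hv =>
    R.eventually_inter_Cv_eq_singleton hV.subset hy' ⟨v, hv⟩

end AverkovHenk
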